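/- arXiv:2203.02362 — 2 statements merged into one kernel-verified Lean document; each statement's English description precedes it below -/
import Mathlib

section
/- Let G be a finite group whose power graph is a cograph, and let x, w ∈ G be commuting elements of prime orders p and q with q < p. Then C_G(w) is a semidirect product ⟨x⟩ ⋊ Q where ⟨x⟩ ≅ C_p and Q is an abelian q-group isomorphic to a subgroup of ⟨w⟩ × C_{q^n} for some n ≥ 0 containing ⟨w⟩, with Q/⟨w⟩ acting without nontrivial fixed points on ⟨x⟩; in particular the order of Q/⟨w⟩ divides p − 1. -/
/-- The power graph of a group: `g` and `h` are adjacent iff they are distinct and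
one is a power (integer power) of the other. -/
def powerGraph (G : Type*) [Group G] : SimpleGraph G where
  Adj g h := g ≠ h ∧ (h ∈ Subgroup.zpowers g ∨ g ∈ Subgroup.zpowers h)
  symm := ⟨fun g h ⟨hne, hor⟩ => ⟨hne.symm, hor.symm⟩⟩
  loopless := ⟨fun g h => h.1 rfl⟩

/-- `a, b, c, d` induce a path on four vertices in `Γ`. -/
def InducedP4 {V : Type*} (Γ : SimpleGraph V) (a b c d : V) : Prop :=
  a ≠ c ∧ a ≠ d ∧ b ≠ d ∧ Γ.Adj a b ∧ Γ.Adj b c ∧ Γ.Adj c d ∧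
    ¬Γ.Adj a c ∧ ¬Γ.Adj a d ∧ ¬Γ.Adj b d

/-- A graph is a cograph iff it has no induced `P4`. -/
def IsCograph {V : Type*} (Γ : SimpleGraph V) : Prop :=
  ∀ a b c d : V, ¬ InducedP4 Γ a b c d

/-- The prime graph (Gruenberg–Kegel graph) of a group, as a graph on `ℕ`. -/
def primeGraph (G : Type*) [Group G] : SimpleGraph ℕ where
  Adj p q := p ≠ q ∧ p.Prime ∧ q.Prime ∧ ∃ g : G, orderOf g = p * q
  symm := ⟨fun p q ⟨hne, hp, hq, g, hg⟩ => ⟨hne.symm, hq, hp, g, by rwa [Nat.mul_comm]⟩⟩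
  loopless := ⟨fun p h => h.1 rfl⟩

/-!
In a cograph power graph, let `x, w ≠ 1` commute and have coprime orders. An element `g`
commuting with `w`, of order prime to `|w|`, is comparable with `x`, or else
`x — xw — w — gw` is an induced `P₄`; and if `x` is a power of `g`, the path `w — xw — x — g`
forces `g` into `⟨xw⟩`, hence into `⟨x⟩`. So the `q'`-elements of `C_G(w)` form `⟨x⟩`, a normal
subgroup complemented by a Sylow `q`-subgroup `Q ∋ w`, and symmetrically the elements of `Q`
centralizing `x` form `⟨w⟩`. Conjugation therefore maps `Q` into the cyclic group
`Aut ⟨x⟩ ≅ C_{p-1}` with central kernel `⟨w⟩`: hence `Q` is abelian, `Q/⟨w⟩` is cyclic of order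
dividing `p - 1`, and `Q` embeds in `⟨w⟩ × C_{q^n}`.
-/

open Subgroup
open scoped Pointwise

section CoprimeOrders

variable {G : Type*} [Group G]

theorem eq_one_of_mem_zpowers_of_coprime {a b : G} (h : a ∈ zpowers b)
    (hab : (orderOf a).Coprime (orderOf b)) : a = 1 :=
  orderOf_eq_one_iff.1 (hab.eq_one_of_dvd (orderOf_dvd_of_mem_zpowers h))

theorem Commute.mem_zpowers_mul_self {a b : G} (h : Commute a b)
    (hab : (orderOf a).Coprime (orderOf b)) : a ∈ zpowers (a * b) := by
  have hpow : (a * b) ^ orderOf b = a ^ orderOf b := by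
    rw [h.mul_pow, pow_orderOf_eq_one, mul_one]
  have ha : a ∈ zpowers (a ^ orderOf b) := mem_zpowers_pow_iff.2 hab.symm
  exact zpowers_le.2 (hpow ▸ pow_mem (mem_zpowers _) _) ha

theorem Commute.mem_zpowers_of_mem_zpowers_mul {a b c : G} (h : Commute a b)
    (hc : c ∈ zpowers (a * b)) (hcb : (orderOf c).Coprime (orderOf b)) : c ∈ zpowers a := by
  obtain ⟨k, rfl⟩ := mem_zpowers_iff.1 hc
  have hpow : ((a * b) ^ k) ^ orderOf b = (a ^ orderOf b) ^ k := by
    rw [← zpow_natCast, ← zpow_mul, mul_comm, zpow_mul, zpow_natCast, h.mul_pow,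
      pow_orderOf_eq_one, mul_one]
  have hc' : (a * b) ^ k ∈ zpowers (((a * b) ^ k) ^ orderOf b) := mem_zpowers_pow_iff.2 hcb.symm
  rw [hpow] at hc'
  exact zpowers_le.2 (zpow_mem (pow_mem (mem_zpowers a) _) _) hc'

end CoprimeOrders

namespace IsCograph

variable {G : Type*} [Group G]

/-- The cograph condition forbids the induced path `a — a w — w — b w`. -/
theorem mem_zpowers_or_mem_zpowers (hco : IsCograph (powerGraph G)) {a b w : G}
    (ha : Commute a w) (hb : Commute b w) (haw : (orderOf a).Coprime (orderOf w))
    (hbw : (orderOf b).Coprime (orderOf w)) (hw : w ≠ 1) :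
    a ∈ zpowers b ∨ b ∈ zpowers a := by
  by_contra! ⟨hab, hba⟩
  have ha1 : a ≠ 1 := fun h => hab (h ▸ one_mem _)
  have hb1 : b ≠ 1 := fun h => hba (h ▸ one_mem _)
  have hw_a : w ∉ zpowers a := fun h => hw (eq_one_of_mem_zpowers_of_coprime h haw.symm)
  have hb_aw : b ∉ zpowers (a * w) := fun h => hba (ha.mem_zpowers_of_mem_zpowers_mul h hbw)
  have ha_bw : a ∉ zpowers (b * w) := fun h => hab (hb.mem_zpowers_of_mem_zpowers_mul h haw)
  refine hco a (a * w) w (b * w) ⟨?_, ?_, ?_, ?_, ?_, ?_, ?_, ?_, ?_⟩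
  · rintro rfl
    exact hw_a (mem_zpowers a)
  · rintro rfl
    exact ha_bw (mem_zpowers _)
  · intro h
    exact hab (mul_right_cancel h ▸ mem_zpowers b)
  · exact ⟨fun h => hw (mul_eq_left.1 h.symm), Or.inr (ha.mem_zpowers_mul_self haw)⟩
  · exact ⟨fun h => ha1 (mul_eq_right.1 h),
      Or.inl (ha.eq ▸ ha.symm.mem_zpowers_mul_self haw.symm)⟩
  · exact ⟨fun h => hb1 (mul_eq_right.1 h.symm),
      Or.inr (hb.eq ▸ hb.symm.mem_zpowers_mul_self hbw.symm)⟩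
  · rintro ⟨-, h | h⟩
    · exact hw_a h
    · exact ha1 (eq_one_of_mem_zpowers_of_coprime h haw)
  · rintro ⟨-, h | h⟩
    · exact hw_a (zpowers_le.2 h (hb.eq ▸ hb.symm.mem_zpowers_mul_self hbw.symm))
    · exact ha_bw h
  · rintro ⟨-, h | h⟩
    · exact hb_aw (zpowers_le.2 h (hb.mem_zpowers_mul_self hbw))
    · exact ha_bw (zpowers_le.2 h (ha.mem_zpowers_mul_self haw))

/-- The cograph condition forbids the induced path `w — a w — a — g`. -/
theorem mem_zpowers_mul_or_mul_mem_zpowers (hco : IsCograph (powerGraph G)) {a w g : G}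
    (ha : Commute a w) (haw : (orderOf a).Coprime (orderOf w)) (ha1 : a ≠ 1) (hw : w ≠ 1)
    (hag : a ∈ zpowers g) : g ∈ zpowers (a * w) ∨ a * w ∈ zpowers g := by
  by_contra! ⟨hg_aw, haw_g⟩
  have ha_w : a ∉ zpowers w := fun h => ha1 (eq_one_of_mem_zpowers_of_coprime h haw)
  refine hco w (a * w) a g ⟨?_, ?_, ?_, ?_, ?_, ?_, ?_, ?_, ?_⟩
  · rintro rfl
    exact ha_w (mem_zpowers _)
  · rintro rfl
    exact ha_w hag
  · rintro rfl
    exact hg_aw (mem_zpowers _)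
  · exact ⟨fun h => ha1 (mul_eq_right.1 h.symm),
      Or.inr (ha.eq ▸ ha.symm.mem_zpowers_mul_self haw.symm)⟩
  · exact ⟨fun h => hw (mul_eq_left.1 h), Or.inl (ha.mem_zpowers_mul_self haw)⟩
  · refine ⟨?_, Or.inr hag⟩
    rintro rfl
    exact hg_aw (ha.mem_zpowers_mul_self haw)
  · rintro ⟨-, h | h⟩
    · exact ha_w h
    · exact hw (eq_one_of_mem_zpowers_of_coprime h haw.symm)
  · rintro ⟨-, h | h⟩
    · exact ha_w (zpowers_le.2 h hag)
    · exact haw_g (mul_mem hag h)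
  · rintro ⟨-, h | h⟩
    · exact hg_aw h
    · exact haw_g h

theorem mem_zpowers_of_commute_of_coprime (hco : IsCograph (powerGraph G)) {x w g : G}
    (hxw : Commute x w) (hxw' : (orderOf x).Coprime (orderOf w)) (hx : x ≠ 1) (hw : w ≠ 1)
    (hgw : Commute g w) (hg : (orderOf g).Coprime (orderOf w)) : g ∈ zpowers x := by
  rcases hco.mem_zpowers_or_mem_zpowers hxw hgw hxw' hg hw with hxg | hgx
  · rcases hco.mem_zpowers_mul_or_mul_mem_zpowers hxw hxw' hx hw hxg with h | h
    · exact hxw.mem_zpowers_of_mem_zpowers_mul h hg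
    · have hw_g : w ∈ zpowers g := zpowers_le.2 h (hxw.eq ▸ hxw.symm.mem_zpowers_mul_self hxw'.symm)
      exact absurd (eq_one_of_mem_zpowers_of_coprime hw_g hg.symm) hw
  · exact hgx

theorem mem_zpowers_of_orderOf_eq_prime (hco : IsCograph (powerGraph G)) {p q : ℕ}
    (hp : p.Prime) (hq : q.Prime) (hpq : p ≠ q) {x w g : G} (hxw : Commute x w)
    (hx : orderOf x = p) (hw : orderOf w = q) (hgw : Commute g w) (hg : (orderOf g).Coprime q) :
    g ∈ zpowers x :=
  hco.mem_zpowers_of_commute_of_coprime hxw (hx ▸ hw ▸ (Nat.coprime_primes hp hq).2 hpq)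
    (fun h => hp.ne_one (hx ▸ orderOf_eq_one_iff.2 h))
    (fun h => hq.ne_one (hw ▸ orderOf_eq_one_iff.2 h)) hgw (hw ▸ hg)

theorem mem_zpowers_of_commute_of_mem_zpowers (hco : IsCograph (powerGraph G)) {p q : ℕ}
    (hp : p.Prime) (hq : q.Prime) (hpq : p ≠ q) {x w y g : G} (hxw : Commute x w)
    (hx : orderOf x = p) (hw : orderOf w = q) (hy : y ∈ zpowers x) (hy1 : y ≠ 1)
    (hgy : Commute g y) (hg : (orderOf g).Coprime p) : g ∈ zpowers w := by
  obtain ⟨k, rfl⟩ := mem_zpowers_iff.1 hy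
  have hyp : orderOf (x ^ k) = p := ((Nat.dvd_prime hp).1
    (hx ▸ orderOf_dvd_of_mem_zpowers hy)).resolve_left (mt orderOf_eq_one_iff.1 hy1)
  exact hco.mem_zpowers_of_orderOf_eq_prime hq hp hpq.symm (hxw.symm.zpow_right k) hw hyp hgy hg

end IsCograph

theorem orderOf_mul_mul_inv {G : Type*} [Group G] (g y : G) :
    orderOf (g * y * g⁻¹) = orderOf y := by
  simpa using orderOf_injective (MulAut.conj g).toMonoidHom (MulAut.conj g).injective y

theorem le_normalizer_of_forall_coprime_mem {G : Type*} [Group G] {q : ℕ} {C N : Subgroup G}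
    (hNC : N ≤ C) (hN : ∀ g ∈ C, (orderOf g).Coprime q → g ∈ N)
    (hNq : ∀ g ∈ N, (orderOf g).Coprime q) : C ≤ normalizer (N : Set G) :=
  le_normalizer_iff.2 fun g hg y hy =>
    hN _ (mul_mem (mul_mem hg (hNC hy)) (inv_mem hg)) (orderOf_mul_mul_inv g y ▸ hNq y hy)

theorem sup_sylow_eq_top_of_forall_coprime_mem {K : Type*} [Group K] [Finite K] {q : ℕ}
    [Fact q.Prime] {N : Subgroup K} (hN : ∀ g : K, (orderOf g).Coprime q → g ∈ N)
    (S : Sylow q K) : N ⊔ S = ⊤ := by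
  rw [← index_eq_one]
  by_contra hne
  obtain ⟨r, hr, hrN⟩ := Nat.exists_prime_and_dvd hne
  have := Fact.mk hr
  obtain ⟨T⟩ : Nonempty (Sylow r K) := inferInstance
  by_cases hrq : r = q
  · subst hrq
    exact S.not_dvd_index (hrN.trans (index_dvd_of_le le_sup_right))
  · have hTN : (T : Subgroup K) ≤ N := fun t ht => by
      have := T.isPGroup'.orderOf_coprime ((Nat.coprime_primes hr Fact.out).2 hrq) ⟨t, ht⟩
      exact hN t (by rwa [Subgroup.orderOf_mk] at this)
    exact T.not_dvd_index (hrN.trans (index_dvd_of_le (hTN.trans le_sup_left)))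

theorem exists_isPGroup_forall_mem_eq_mul {G : Type*} [Group G] [Finite G] {q : ℕ}
    [Fact q.Prime] {C N W : Subgroup G} (hNC : N ≤ C) (hCN : C ≤ normalizer (N : Set G))
    (hN : ∀ g ∈ C, (orderOf g).Coprime q → g ∈ N) (hWC : W ≤ C) (hW : IsPGroup q W) :
    ∃ Q : Subgroup G, W ≤ Q ∧ Q ≤ C ∧ IsPGroup q Q ∧
      ∀ g ∈ C, ∃ y ∈ N, ∃ u ∈ Q, g = y * u := by
  have := (normal_subgroupOf_iff_le_normalizer hNC).2 hCN
  obtain ⟨S, hWS⟩ := (hW.comap_subtype (K := C)).exists_le_sylow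
  have hsup : N.subgroupOf C ⊔ S = ⊤ :=
    sup_sylow_eq_top_of_forall_coprime_mem
      (fun (g : C) hg => hN g g.2 (by rwa [Subgroup.orderOf_coe])) S
  refine ⟨(S : Subgroup C).map C.subtype, fun w hw => ⟨⟨w, hWC hw⟩, hWS hw, rfl⟩,
    map_subtype_le _, S.isPGroup'.map _, fun g hg => ?_⟩
  have hgS : (⟨g, hg⟩ : C) ∈ (N.subgroupOf C : Set C) * ((S : Subgroup C) : Set C) := by
    rw [← normal_mul, hsup]
    exact mem_top _
  obtain ⟨y, hy, u, hu, hyu⟩ := hgS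
  exact ⟨y, hy, u, ⟨u, hu, rfl⟩, congrArg Subtype.val hyu.symm⟩

section CyclicQuotient

variable {A : Type*} [Group A] [Finite A] {q : ℕ} [Fact q.Prime]

theorem IsPGroup.exists_mulEquiv_zmod_pow [IsCyclic A] (hA : IsPGroup q A) :
    ∃ n, Nonempty (A ≃* Multiplicative (ZMod (q ^ n))) := by
  obtain ⟨n, hn⟩ := hA.exists_card_eq
  exact ⟨n, ⟨mulEquivOfCyclicCardEq (hn.trans (Nat.card_zmod _).symm)⟩⟩

/-- Either `A` is cyclic, or a lift of a generator of the cyclic group `A ⧸ ker χ` spans a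
complement of `ker χ`, which has prime order. -/
theorem exists_injective_prod_zmod_of_card_ker [IsMulCommutative A] {W M : Type*} [Group W]
    [Group M] [IsCyclic M] (hA : IsPGroup q A) (hW : Nat.card W = q) (χ : A →* M)
    (hχ : Nat.card χ.ker = q) :
    ∃ n, ∃ f : A →* W × Multiplicative (ZMod (q ^ n)), Function.Injective f := by
  set K := χ.ker
  have : IsCyclic (A ⧸ K) := (QuotientGroup.quotientKerEquivRange χ).isCyclic.2 inferInstance
  obtain ⟨t', ht'⟩ := IsCyclic.exists_generator (α := A ⧸ K)
  obtain ⟨t, rfl⟩ := QuotientGroup.mk_surjective t'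
  have hdecomp : ∀ a : A, ∃ j : ℤ, (t ^ j)⁻¹ * a ∈ K := fun a => by
    obtain ⟨j, hj⟩ := mem_zpowers_iff.1 (ht' a)
    exact ⟨j, QuotientGroup.eq.1 (by rw [QuotientGroup.mk_zpow, hj])⟩
  by_cases hKt : K ≤ zpowers t
  · have : IsCyclic A := ⟨t, fun a => by
      obtain ⟨j, hj⟩ := hdecomp a
      simpa using mem_zpowers_iff.1 (mul_mem (zpow_mem (mem_zpowers t) j) (hKt hj))⟩
    obtain ⟨n, ⟨e⟩⟩ := hA.exists_mulEquiv_zmod_pow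
    exact ⟨n, (1 : A →* W).prod e.toMonoidHom, fun a b hab => e.injective (congrArg Prod.snd hab)⟩
  · have hdisj : K ⊓ zpowers t = ⊥ := by
      rcases (Nat.dvd_prime Fact.out).1 (hχ ▸ card_dvd_of_le (inf_le_left : K ⊓ zpowers t ≤ K))
        with h | h
      · exact card_eq_one.1 h
      · exact absurd (inf_eq_left.1 (eq_of_le_of_card_ge inf_le_left (hχ ▸ h.ge))) hKt
    let φ : K →* A ⧸ zpowers t := (QuotientGroup.mk' _).comp K.subtype
    have hφ : Function.Bijective φ := by
      refine ⟨(injective_iff_map_eq_one φ).2 fun k hk => ?_, fun a => ?_⟩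
      · have hk' : (k : A) ∈ K ⊓ zpowers t := ⟨k.2, (QuotientGroup.eq_one_iff _).1 hk⟩
        rw [hdisj, mem_bot] at hk'
        exact Subtype.ext hk'
      · obtain ⟨a, rfl⟩ := QuotientGroup.mk_surjective a
        obtain ⟨j, hj⟩ := hdecomp a
        refine ⟨⟨_, hj⟩, ?_⟩
        simp [φ, (QuotientGroup.eq_one_iff _).2 (zpow_mem (mem_zpowers t) j)]
    let ψ : A ⧸ zpowers t ≃* W :=
      (MulEquiv.ofBijective φ hφ).symm.trans (mulEquivOfPrimeCardEq hχ hW)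
    obtain ⟨n, ⟨ζ⟩⟩ := (hA.to_quotient K).exists_mulEquiv_zmod_pow
    refine ⟨n, (ψ.toMonoidHom.comp (QuotientGroup.mk' _)).prod
      (ζ.toMonoidHom.comp (QuotientGroup.mk' K)), (injective_iff_map_eq_one _).2 fun a ha => ?_⟩
    have ha' : a ∈ K ⊓ zpowers t := by
      simp only [Prod.ext_iff, MonoidHom.prod_apply, MonoidHom.comp_apply, Prod.fst_one,
        Prod.snd_one, MulEquiv.coe_toMonoidHom, MulEquiv.map_eq_one_iff, QuotientGroup.mk'_apply,
        QuotientGroup.eq_one_iff] at ha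
      exact ⟨ha.2, ha.1⟩
    rwa [hdisj, mem_bot] at ha'

end CyclicQuotient

theorem isCyclic_mulAut_of_card_eq_prime {H : Type*} [Group H] {p : ℕ} [Fact p.Prime]
    (hH : Nat.card H = p) : IsCyclic (MulAut H) := by
  have := isCyclic_of_prime_card hH
  rw [(IsCyclic.mulAutMulEquiv H).isCyclic, hH]
  infer_instance

theorem MonoidHom.card_div_card_ker_dvd {A M : Type*} [Group A] [Finite A] [Group M] [Finite M]
    (f : A →* M) : Nat.card A / Nat.card f.ker ∣ Nat.card M := by
  rw [← card_mul_index f.ker, Nat.mul_div_cancel_left _ Nat.card_pos, index_ker]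
  exact card_subgroup_dvd_card _

theorem ker_normalizerMonoidHom_comp_inclusion {G : Type*} [Group G] {P Q : Subgroup G}
    (hQP : Q ≤ normalizer (P : Set G)) :
    (P.normalizerMonoidHom.comp (inclusion hQP)).ker = (centralizer P).subgroupOf Q := by
  ext u
  rw [MonoidHom.mem_ker, MonoidHom.comp_apply, ← MonoidHom.mem_ker, normalizerMonoidHom_ker]
  rfl

/-- Conjugation maps `Q` into the cyclic group `Aut P ≅ C_{p-1}` with central kernel `K`. -/
theorem isMulCommutative_embedding_card_dvd_of_le_normalizer {G : Type*} [Group G] [Finite G]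
    {p q : ℕ} [Fact p.Prime] [Fact q.Prime] {P Q K : Subgroup G} (hP : Nat.card P = p)
    (hQP : Q ≤ normalizer (P : Set G)) (hQ : IsPGroup q Q) (hK : Q ⊓ centralizer P = K)
    (hKQ : K ≤ centralizer Q) (hKq : Nat.card K = q) :
    IsMulCommutative Q ∧
      (∃ n, ∃ f : Q →* K × Multiplicative (ZMod (q ^ n)), Function.Injective f) ∧
      Nat.card Q / q ∣ p - 1 := by
  let χ : Q →* MulAut P := P.normalizerMonoidHom.comp (inclusion hQP)
  have hker : χ.ker = K.subgroupOf Q := by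
    rw [ker_normalizerMonoidHom_comp_inclusion, ← hK]
    ext u
    simp [mem_subgroupOf]
  have hcard : Nat.card χ.ker = q := by
    rw [hker, ← hKq]
    exact Nat.card_congr (subgroupOfEquivOfLe (hK ▸ inf_le_left)).toEquiv
  have := isCyclic_mulAut_of_card_eq_prime hP
  have hcentral : K.subgroupOf Q ≤ center Q := fun u hu =>
    mem_center_iff.2 fun v => Subtype.ext (mem_centralizer_iff.1 (hKQ hu) v v.2)
  have hcomm := χ.isMulCommutative_of_isCyclic_of_ker_le_center (hker ▸ hcentral)
  refine ⟨hcomm, exists_injective_prod_zmod_of_card_ker hQ hKq χ hcard, ?_⟩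
  have := isCyclic_of_prime_card hP
  rw [← hcard, ← Nat.totient_prime Fact.out, ← hP, ← IsCyclic.card_mulAut]
  exact χ.card_div_card_ker_dvd

theorem centralizer_of_smaller_prime_structure
    {G : Type*} [Group G] [Finite G]
    (hco : IsCograph (powerGraph G))
    {p q : ℕ} (hp : p.Prime) (hq : q.Prime) (hqp : q < p)
    {x w : G} (hxw : Commute x w) (hx : orderOf x = p) (hw : orderOf w = q) :
    ∃ (n : ℕ) (Q : Subgroup G),
      -- Q is an abelian q-group containing ⟨w⟩
      Subgroup.zpowers w ≤ Q ∧ IsPGroup q Q ∧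
      (∀ a ∈ Q, ∀ b ∈ Q, Commute a b) ∧
      -- Q is isomorphic to a subgroup of ⟨w⟩ × C_{q^n}
      (∃ f : Q →* (Subgroup.zpowers w) × Multiplicative (ZMod (q ^ n)),
        Function.Injective f) ∧
      -- C_G(w) is the internal semidirect product ⟨x⟩ ⋊ Q
      Q ≤ Subgroup.centralizer ({w} : Set G) ∧
      (∀ g ∈ Subgroup.centralizer ({w} : Set G), ∀ y ∈ Subgroup.zpowers x,
        g * y * g⁻¹ ∈ Subgroup.zpowers x) ∧
      Subgroup.zpowers x ⊓ Q = ⊥ ∧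
      (∀ g ∈ Subgroup.centralizer ({w} : Set G),
        ∃ y ∈ Subgroup.zpowers x, ∃ u ∈ Q, g = y * u) ∧
      -- Q/⟨w⟩ acts without nontrivial fixed points on ⟨x⟩
      (∀ u ∈ Q, u ∉ Subgroup.zpowers w →
        ∀ y ∈ Subgroup.zpowers x, y ≠ 1 → u * y * u⁻¹ ≠ y) ∧
      -- in particular |Q/⟨w⟩| divides p - 1
      (Nat.card Q / q) ∣ (p - 1) := by
  have := Fact.mk hp
  have := Fact.mk hq
  have hpq : p.Coprime q := (Nat.coprime_primes hp hq).2 hqp.ne'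
  have hxC : zpowers x ≤ centralizer {w} := zpowers_le.2 (mem_centralizer_singleton_iff.2 hxw.eq)
  have hmem_x : ∀ g ∈ centralizer {w}, (orderOf g).Coprime q → g ∈ zpowers x := fun _ hg =>
    hco.mem_zpowers_of_orderOf_eq_prime hp hq hqp.ne' hxw hx hw
      (mem_centralizer_singleton_iff.1 hg)
  have hnorm : centralizer {w} ≤ normalizer (zpowers x : Set G) :=
    le_normalizer_of_forall_coprime_mem hxC hmem_x fun y hy =>
      hpq.coprime_dvd_left (hx ▸ orderOf_dvd_of_mem_zpowers hy)
  obtain ⟨Q, hwQ, hQC, hQ, hdecomp⟩ := exists_isPGroup_forall_mem_eq_mul hxC hnorm hmem_x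
    (zpowers_le.2 (mem_centralizer_singleton_iff.2 rfl))
    (IsPGroup.of_card (n := 1) (by rw [Nat.card_zpowers, hw, pow_one]))
  have hQcop : ∀ u ∈ Q, (orderOf u).Coprime p := fun u hu => by
    simpa using hQ.orderOf_coprime hpq.symm ⟨u, hu⟩
  have hQcent : Q ⊓ centralizer (zpowers x) = zpowers w := by
    refine le_antisymm (fun u ⟨hu, hux⟩ => hco.mem_zpowers_of_orderOf_eq_prime hq hp hqp.ne
      hxw.symm hw hx (mem_centralizer_iff.1 hux x (mem_zpowers x)).symm (hQcop u hu))
      (le_inf hwQ ?_)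
    rw [zpowers_le, zpowers_eq_closure, centralizer_closure]
    exact mem_centralizer_singleton_iff.2 hxw.eq.symm
  obtain ⟨hcomm, ⟨n, f, hf⟩, hdvd⟩ := isMulCommutative_embedding_card_dvd_of_le_normalizer
    (by rw [Nat.card_zpowers, hx]) (hQC.trans hnorm) hQ hQcent
    (by rwa [le_centralizer_iff, zpowers_eq_closure, centralizer_closure])
    (by rw [Nat.card_zpowers, hw])
  obtain ⟨k, hk⟩ := hQ.exists_card_eq
  refine ⟨n, Q, hwQ, hQ, fun a ha b hb => setLike_mul_comm ha hb, ⟨f, hf⟩, hQC,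
    le_normalizer_iff.1 hnorm, ?_, hdecomp, ?_, hdvd⟩
  · refine (disjoint_of_coprime_natCard ?_).eq_bot
    rw [Nat.card_zpowers, hx, hk]
    exact hpq.pow_right k
  · intro u hu hunw y hy hy1 hfix
    exact hunw (hco.mem_zpowers_of_commute_of_mem_zpowers hp hq hqp.ne' hxw hx hw hy hy1
      (mul_inv_eq_iff_eq_mul.1 hfix) (hQcop u hu))
end

section
/- Let G be a finite group whose power graph is a cograph, and suppose the socle of G contains two distinct nonabelian simple direct factors, or a nontrivial abelian direct factor together with a nonabelian simple direct factor. Then a contradiction arises; equivalently, the socle of a finite power-cograph group is either abelian or a single nonabelian simple group. -/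
/-- A minimal normal subgroup. -/
def IsMinimalNormal {G : Type*} [Group G] (H : Subgroup G) : Prop :=
  H.Normal ∧ H ≠ ⊥ ∧ ∀ K : Subgroup G, K.Normal → K < H → K = ⊥

/-- The socle: the subgroup generated by all minimal normal subgroups. -/
def socle (G : Type*) [Group G] : Subgroup G :=
  ⨆ H ∈ {H : Subgroup G | IsMinimalNormal H}, H

/-!
If `A` and `B` are commuting subgroups with `A ⊓ B = ⊥`, `A ≠ ⊥` and `B` perfect and nontrivial,
the power graph contains an induced `P4`. Take `a ∈ A` of prime order `p` and, since a nontrivial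
perfect group is not a `p`-group, `t ∈ B` of prime order `r ≠ p`. If some `x ∈ B` of order `r`
lies outside `⟨t⟩`, then `t — t a — a — x a` is an induced `P4`. Otherwise `⟨t⟩` is normal in `B`;
as `Aut ⟨t⟩` is abelian and `B` is perfect, `t` is central in `B`, and for `s ∈ B` of prime order
`≠ r` the path `a — a t — t — s t` is induced.

Distinct minimal normal subgroups commute and meet trivially, and a nonabelian one is perfect, so a
nonabelian minimal normal subgroup `M` is the only one: it is the socle. The socle of `M` is
characteristic in `M`, hence normal in `G`, hence all of `M`; the same argument inside `M` (whose
power graph is an induced subgraph) shows that `M` is its own unique minimal normal subgroup, i.e.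
simple.
-/

open Subgroup

section PowerGraph

variable {G H : Type*} [Group G] [Group H]

theorem Commute.mem_zpowers_mul_of_coprime {x y : G} (h : Commute x y)
    (hco : (orderOf x).Coprime (orderOf y)) : x ∈ zpowers (x * y) := by
  have hpow : (x * y) ^ orderOf y = x ^ orderOf y := by
    rw [h.mul_pow, pow_orderOf_eq_one, mul_one]
  exact zpowers_le.2 (hpow ▸ pow_mem (mem_zpowers _) _) (mem_zpowers_pow_iff.2 hco.symm)

theorem eq_one_of_mem_zpowers_of_coprime_s10 {x y : G} (hco : (orderOf x).Coprime (orderOf y))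
    (hx : x ∈ zpowers y) : x = 1 :=
  orderOf_eq_one_iff.1 (hco.eq_one_of_dvd (orderOf_dvd_of_mem_zpowers hx))

theorem inducedP4_powerGraph {x y v : G} (hxv : Commute x v) (hyv : Commute y v)
    (hx : (orderOf x).Coprime (orderOf v)) (hy : (orderOf y).Coprime (orderOf v)) (hv : v ≠ 1)
    (hxy : x ∉ zpowers (y * v)) (hyx : y ∉ zpowers (x * v)) :
    InducedP4 (powerGraph G) x (x * v) v (y * v) := by
  have hx_xv : x ∈ zpowers (x * v) := hxv.mem_zpowers_mul_of_coprime hx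
  have hv_xv : v ∈ zpowers (x * v) :=
    hxv.eq ▸ hxv.symm.mem_zpowers_mul_of_coprime hx.symm
  have hv_yv : v ∈ zpowers (y * v) :=
    hyv.eq ▸ hyv.symm.mem_zpowers_mul_of_coprime hy.symm
  have hy_yv : y ∈ zpowers (y * v) := hyv.mem_zpowers_mul_of_coprime hy
  have hx1 : x ≠ 1 := fun h => hxy (h ▸ one_mem _)
  have hy1 : y ≠ 1 := fun h => hyx (h ▸ one_mem _)
  have hv_x : v ∉ zpowers x := fun h => hv (eq_one_of_mem_zpowers_of_coprime_s10 hx.symm h)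
  have hx_v : x ∉ zpowers v := fun h => hx1 (eq_one_of_mem_zpowers_of_coprime_s10 hx h)
  refine ⟨fun h => hx_v (h ▸ mem_zpowers x), fun h => hxy (h ▸ mem_zpowers _),
    fun h => hyx (mul_right_cancel h ▸ hx_xv), ⟨?_, .inr hx_xv⟩, ⟨?_, .inl hv_xv⟩,
    ⟨?_, .inr hv_yv⟩, ?_, ?_, ?_⟩
  · simpa using hv
  · simpa using hx1
  · simpa [eq_comm] using hy1
  · rintro ⟨-, h | h⟩
    exacts [hv_x h, hx_v h]
  · rintro ⟨-, h | h⟩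
    exacts [hv_x (zpowers_le.2 h hv_yv), hxy h]
  · rintro ⟨-, h | h⟩
    exacts [hyx (zpowers_le.2 h hy_yv), hxy (zpowers_le.2 h hx_xv)]

theorem IsCograph.comap {V W : Type*} {Γ : SimpleGraph W} {Γ' : SimpleGraph V}
    (f : Γ' ↪g Γ) (h : IsCograph Γ) : IsCograph Γ' :=
  fun a b c d ⟨hac, had, hbd, hab, hbc, hcd, hnac, hnad, hnbd⟩ =>
    h (f a) (f b) (f c) (f d) ⟨f.injective.ne hac, f.injective.ne had, f.injective.ne hbd,
      f.map_adj_iff.2 hab, f.map_adj_iff.2 hbc, f.map_adj_iff.2 hcd,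
      mt f.map_adj_iff.1 hnac, mt f.map_adj_iff.1 hnad, mt f.map_adj_iff.1 hnbd⟩

def powerGraphEmbedding (f : H →* G) (hf : Function.Injective f) :
    powerGraph H ↪g powerGraph G where
  toFun := f
  inj' := hf
  map_rel_iff' {g h} := by
    simp only [Function.Embedding.coeFn_mk, powerGraph, hf.ne_iff, ← MonoidHom.map_zpowers,
      mem_map_iff_mem hf]

end PowerGraph

section Subgroups

variable {G : Type*} [Group G]

theorem Subgroup.mem_zpowers_of_mem_zpowers_mul {A B : Subgroup G} (hAB : Disjoint A B)
    {a b c : G} (ha : a ∈ A) (hb : b ∈ B) (hc : c ∈ B) (hba : Commute b a)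
    (h : c ∈ zpowers (b * a)) : c ∈ zpowers b := by
  obtain ⟨k, rfl⟩ := mem_zpowers_iff.1 h
  have hak : a ^ k = 1 := by
    refine disjoint_def.1 hAB (zpow_mem ha k) ?_
    simpa [hba.mul_zpow] using mul_mem (zpow_mem (inv_mem hb) k) hc
  simp [hba.mul_zpow, hak]

theorem mem_zpowers_of_mem_zpowers_of_orderOf_eq [Finite G] {x y : G} (h : x ∈ zpowers y)
    (hxy : orderOf x = orderOf y) : y ∈ zpowers x := by
  have heq : zpowers x = zpowers y :=
    eq_of_le_of_card_ge (zpowers_le.2 h) (by rw [Nat.card_zpowers, Nat.card_zpowers, hxy])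
  exact heq ▸ mem_zpowers y

theorem Subgroup.commutator_normalizer_le_centralizer (C : Subgroup G) [IsCyclic C] :
    ⁅normalizer (C : Set G), normalizer (C : Set G)⁆ ≤ centralizer C := by
  let _ : CommGroup (MulAut C) := (IsCyclic.mulAutMulEquiv C).toMonoidHom.commGroupOfInjective
    (IsCyclic.mulAutMulEquiv C).injective
  have h := map_mono (f := (normalizer (C : Set G)).subtype)
    (Abelianization.commutator_subset_ker C.normalizerMonoidHom)
  rw [normalizerMonoidHom_ker, map_subtype_commutator, subgroupOf_map_subtype] at h
  exact h.trans inf_le_left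

theorem Group.IsPerfect.exists_prime_orderOf_ne [Finite G] [Nontrivial G] [IsPerfect G]
    {p : ℕ} (hp : p.Prime) : ∃ g : G, (orderOf g).Prime ∧ orderOf g ≠ p := by
  by_contra! h
  have : Fact p.Prime := ⟨hp⟩
  have hcard : ∀ r : ℕ, r.Prime → r ∣ Nat.card G → r = p := fun r hr hdvd => by
    have : Fact r.Prime := ⟨hr⟩
    obtain ⟨g, hg⟩ := exists_prime_orderOf_dvd_card' r hdvd
    exact hg ▸ h g (hg ▸ hr)
  have hpG : IsPGroup p G := .of_card (Nat.eq_prime_pow_of_unique_prime_dvd Nat.card_pos.ne'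
    fun hr hdvd => hcard _ hr hdvd)
  exact not_isNilpotent G hpG.isNilpotent

theorem exists_prime_orderOf [Finite G] [Nontrivial G] : ∃ g : G, (orderOf g).Prime := by
  have : Fact (Nat.card G).minFac.Prime := ⟨Nat.minFac_prime Finite.one_lt_card.ne'⟩
  obtain ⟨g, hg⟩ := exists_prime_orderOf_dvd_card' _ (Nat.minFac_dvd (Nat.card G))
  exact ⟨g, hg ▸ Fact.out⟩

theorem Subgroup.le_centralizer_of_le_normalizer_of_commutator_eq_self (C : Subgroup G) [IsCyclic C]
    {B : Subgroup G} (hBC : B ≤ normalizer (C : Set G)) (hB : ⁅B, B⁆ = B) :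
    B ≤ centralizer C := by
  rw [← hB]
  exact (commutator_mono hBC hBC).trans C.commutator_normalizer_le_centralizer

theorem not_isCograph_of_commute_of_commutator_eq_self [Finite G] {A B : Subgroup G}
    (hAB : ∀ a ∈ A, ∀ b ∈ B, Commute a b) (hdisj : Disjoint A B) (hA : A ≠ ⊥)
    (hB : ⁅B, B⁆ = B) (hB' : B ≠ ⊥) : ¬ IsCograph (powerGraph G) := by
  intro hco
  have : Group.IsPerfect B := isPerfect_iff.2 hB
  have : Nontrivial B := (nontrivial_iff_ne_bot B).2 hB'
  have : Nontrivial A := (nontrivial_iff_ne_bot A).2 hA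
  obtain ⟨⟨a, ha⟩, hap⟩ := exists_prime_orderOf (G := A)
  obtain ⟨⟨t, ht⟩, htr, hta⟩ := Group.IsPerfect.exists_prime_orderOf_ne (G := B) hap
  simp only [orderOf_mk] at hap htr hta
  have hat : (orderOf a).Coprime (orderOf t) := (Nat.coprime_primes hap htr).2 hta.symm
  have ha1 : a ≠ 1 := fun h => hap.one_lt.ne' (orderOf_eq_one_iff.2 h)
  have ht1 : t ≠ 1 := fun h => htr.one_lt.ne' (orderOf_eq_one_iff.2 h)
  by_cases hcyc : ∀ x ∈ B, orderOf x = orderOf t → x ∈ zpowers t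
  · -- `zpowers t` is normal in `B`, hence central since `B` is perfect
    have hnorm : B ≤ normalizer (zpowers t : Set G) := by
      rw [zpowers_eq_closure, le_normalizer_closure_iff]
      rintro b hb _ rfl
      rw [← zpowers_eq_closure, ← MulAut.conj_apply]
      exact hcyc _ (by simpa using mul_mem (mul_mem hb ht) (inv_mem hb)) (MulEquiv.orderOf_eq _ _)
    have hcent := (zpowers t).le_centralizer_of_le_normalizer_of_commutator_eq_self hnorm hB
    obtain ⟨⟨s, hs⟩, hsp, hst⟩ := Group.IsPerfect.exists_prime_orderOf_ne (G := B) htr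
    simp only [orderOf_mk] at hsp hst
    have hst' : (orderOf s).Coprime (orderOf t) := (Nat.coprime_primes hsp htr).2 hst
    have hs1 : s ≠ 1 := fun h => hsp.one_lt.ne' (orderOf_eq_one_iff.2 h)
    refine hco _ _ _ _ (inducedP4_powerGraph (hAB a ha t ht)
      (mem_centralizer_iff.1 (hcent hs) t (mem_zpowers t)).symm hat hst' ht1 ?_ ?_)
    · exact fun h => ha1 (disjoint_def.1 hdisj ha (zpowers_le.2 (mul_mem hs ht) h))
    · refine fun h => hs1 (eq_one_of_mem_zpowers_of_coprime_s10 hst' ?_)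
      exact mem_zpowers_of_mem_zpowers_mul hdisj ha ht hs (hAB a ha t ht).symm
        ((hAB a ha t ht).eq ▸ h)
  · push Not at hcyc
    obtain ⟨x, hx, hxt, hxt'⟩ := hcyc
    refine hco _ _ _ _ (inducedP4_powerGraph (hAB a ha t ht).symm (hAB a ha x hx).symm hat.symm
      (hxt ▸ hat.symm) ha1 (fun h => hxt' ?_)
      (fun h => hxt' (mem_zpowers_of_mem_zpowers_mul hdisj ha ht hx (hAB a ha t ht).symm h)))
    exact mem_zpowers_of_mem_zpowers_of_orderOf_eq
      (mem_zpowers_of_mem_zpowers_mul hdisj ha hx ht (hAB a ha x hx).symm h) hxt.symm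

theorem IsMinimalNormal.disjoint_of_ne {H K : Subgroup G} (hH : IsMinimalNormal H)
    (hK : IsMinimalNormal K) (hne : H ≠ K) : Disjoint H K := by
  have := hH.1
  have := hK.1
  rw [disjoint_iff]
  refine hH.2.2 _ inferInstance (inf_le_left.lt_of_ne fun h => hne ?_)
  have hle : H ≤ K := h ▸ inf_le_right
  exact hle.eq_of_not_lt fun hlt => hH.2.1 (hK.2.2 H hH.1 hlt)

theorem IsMinimalNormal.commute_of_ne {H K : Subgroup G} (hH : IsMinimalNormal H)
    (hK : IsMinimalNormal K) (hne : H ≠ K) {a b : G} (ha : a ∈ H) (hb : b ∈ K) : Commute a b :=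
  commute_of_normal_of_disjoint H K hH.1 hK.1 (hH.disjoint_of_ne hK hne) a b ha hb

theorem IsMinimalNormal.commutator_eq_self {H : Subgroup G} (hH : IsMinimalNormal H)
    (hnc : ¬ ∀ a ∈ H, ∀ b ∈ H, Commute a b) : ⁅H, H⁆ = H := by
  have := hH.1
  refine (commutator_le_left H H).eq_of_not_lt fun hlt => hnc fun a ha b hb => ?_
  have hcent := commutator_eq_bot_iff_le_centralizer.1 (hH.2.2 _ inferInstance hlt)
  exact (mem_centralizer_iff.1 (hcent ha) b hb).symm

theorem IsMinimalNormal.map_mulEquiv {G' : Type*} [Group G'] {H : Subgroup G}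
    (hH : IsMinimalNormal H) (e : G ≃* G') : IsMinimalNormal (H.map e.toMonoidHom) := by
  refine ⟨hH.1.map _ e.surjective, (map_eq_bot_iff_of_injective _ e.injective).not.2 hH.2.1,
    fun K hK hlt => ?_⟩
  have hKe := map_comap_eq_self_of_surjective (f := e.toMonoidHom) e.surjective K
  have hlt' : K.comap e.toMonoidHom < H :=
    (map_lt_map_iff_of_injective e.injective).1 (hKe ▸ hlt)
  rw [← hKe, hH.2.2 _ (hK.comap _) hlt', Subgroup.map_bot]

theorem exists_isMinimalNormal_le [Finite G] {N : Subgroup G} (hN : N.Normal) (hN' : N ≠ ⊥) :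
    ∃ H, IsMinimalNormal H ∧ H ≤ N := by
  obtain ⟨H, hHN, ⟨hH, hH'⟩, hmin⟩ :=
    exists_minimal_le_of_wellFoundedLT (fun H : Subgroup G => H.Normal ∧ H ≠ ⊥) N ⟨hN, hN'⟩
  exact ⟨H, ⟨hH, hH', fun K hK hlt => not_not.1 fun hK' => hlt.not_ge (hmin ⟨hK, hK'⟩ hlt.le)⟩,
    hHN⟩

theorem IsMinimalNormal.le_socle {H : Subgroup G} (hH : IsMinimalNormal H) : H ≤ socle G :=
  le_iSup₂ (f := fun H (_ : IsMinimalNormal H) => H) H hH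

instance socle_characteristic : (socle G).Characteristic :=
  characteristic_iff_map_le.2 fun φ => map_le_iff_le_comap.2 <|
    iSup₂_le fun _ hH => map_le_iff_le_comap.1 (hH.map_mulEquiv φ).le_socle

theorem Subgroup.normal_map_subtype_of_characteristic (N : Subgroup G) [N.Normal]
    (K : Subgroup N) [hK : K.Characteristic] : (K.map N.subtype).Normal := by
  refine ⟨?_⟩
  rintro _ ⟨k, hk, rfl⟩ g
  exact ⟨MulAut.conjNormal g k, (hK.fixed (MulAut.conjNormal g)).ge hk, MulAut.conjNormal_apply g k⟩

theorem socle_ne_bot [Finite G] [Nontrivial G] : socle G ≠ ⊥ := by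
  obtain ⟨H, hH, -⟩ := exists_isMinimalNormal_le (N := (⊤ : Subgroup G)) normal_top top_ne_bot
  exact ne_bot_of_le_ne_bot hH.2.1 hH.le_socle

theorem commute_of_mem_socle
    (h : ∀ H : Subgroup G, IsMinimalNormal H → ∀ a ∈ H, ∀ b ∈ H, Commute a b) :
    ∀ a ∈ socle G, ∀ b ∈ socle G, Commute a b := by
  have hpair : ∀ H K : Subgroup G, IsMinimalNormal H → IsMinimalNormal K → H ≤ centralizer K :=
    fun H K hH hK a ha => mem_centralizer_iff.2 fun b hb => by
      obtain rfl | hne := eq_or_ne K H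
      exacts [h K hK b hb a ha, hK.commute_of_ne hH hne hb ha]
  have hsoc : socle G ≤ centralizer (socle G) :=
    iSup₂_le fun H hH => le_centralizer_iff.2 (iSup₂_le fun K hK => hpair K H hK hH)
  exact fun a ha b hb => mem_centralizer_iff.1 (hsoc hb) a ha

theorem exists_isMinimalNormal_eq_socle [Finite G] (hco : IsCograph (powerGraph G))
    (hnc : ¬ ∀ a ∈ socle G, ∀ b ∈ socle G, Commute a b) :
    ∃ M, IsMinimalNormal M ∧ socle G = M := by
  obtain ⟨M, hM, hMnc⟩ : ∃ M, IsMinimalNormal M ∧ ¬ ∀ a ∈ M, ∀ b ∈ M, Commute a b := by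
    by_contra! h
    exact hnc (commute_of_mem_socle h)
  have huniq (H : Subgroup G) (hH : IsMinimalNormal H) : H = M := by
    by_contra hne
    exact not_isCograph_of_commute_of_commutator_eq_self
      (fun a ha b hb => hH.commute_of_ne hM hne ha hb) (hH.disjoint_of_ne hM hne)
      hH.2.1 (hM.commutator_eq_self hMnc) hM.2.1 hco
  exact ⟨M, hM, le_antisymm (iSup₂_le fun H hH => (huniq H hH).le) hM.le_socle⟩

theorem isSimpleGroup_of_isMinimalNormal_top (h : IsMinimalNormal (⊤ : Subgroup G)) :
    IsSimpleGroup G where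
  exists_pair_ne := by
    obtain ⟨g, hg⟩ := (Subgroup.ne_bot_iff_exists_ne_one).1 h.2.1
    exact ⟨g, 1, fun h => hg (Subtype.ext h)⟩
  eq_bot_or_eq_top_of_normal N hN :=
    (eq_or_lt_of_le le_top).elim Or.inr fun hlt => Or.inl (h.2.2 N hN hlt)

theorem IsMinimalNormal.socle_eq_top [Finite G] {M : Subgroup G} (hM : IsMinimalNormal M) :
    socle M = ⊤ := by
  have := hM.1
  have : Nontrivial M := (nontrivial_iff_ne_bot M).2 hM.2.1
  have hmap : (socle M).map M.subtype = (⊤ : Subgroup M).map M.subtype := by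
    rw [← MonoidHom.range_eq_map, range_subtype]
    refine (map_subtype_le _).eq_of_not_lt fun hlt => socle_ne_bot (G := M) ?_
    exact (map_eq_bot_iff_of_injective _ M.subtype_injective).1
      (hM.2.2 _ (M.normal_map_subtype_of_characteristic _) hlt)
  exact map_injective M.subtype_injective hmap

theorem IsMinimalNormal.isSimpleGroup [Finite G] (hco : IsCograph (powerGraph G))
    {M : Subgroup G} (hM : IsMinimalNormal M) (hnc : ¬ ∀ a ∈ M, ∀ b ∈ M, Commute a b) :
    IsSimpleGroup M := by
  have hcoM := hco.comap (powerGraphEmbedding M.subtype M.subtype_injective)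
  have hncM : ¬ ∀ a ∈ socle M, ∀ b ∈ socle M, Commute a b := by
    rw [hM.socle_eq_top]
    exact fun h => hnc fun a ha b hb => congrArg Subtype.val (h ⟨a, ha⟩ trivial ⟨b, hb⟩ trivial)
  obtain ⟨K, hK, hsoc⟩ := exists_isMinimalNormal_eq_socle hcoM hncM
  rw [← hsoc, hM.socle_eq_top] at hK
  exact isSimpleGroup_of_isMinimalNormal_top hK

end Subgroups

theorem socle_abelian_or_simple
    {G : Type*} [Group G] [Finite G]
    (hco : IsCograph (powerGraph G)) :
    (∀ a ∈ socle G, ∀ b ∈ socle G, Commute a b) ∨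
    (IsSimpleGroup (socle G) ∧ ¬ ∀ a ∈ socle G, ∀ b ∈ socle G, Commute a b) := by
  by_cases hab : ∀ a ∈ socle G, ∀ b ∈ socle G, Commute a b
  · exact .inl hab
  obtain ⟨M, hM, hsoc⟩ := exists_isMinimalNormal_eq_socle hco hab
  refine .inr ⟨?_, hab⟩
  rw [hsoc] at hab ⊢
  exact hM.isSimpleGroup hco hab
end
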